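/- Let α, τ, ξ be real numbers with 0 < α < 1, ξ ≥ 1/4 and 1+α ≤ τ < 2. Then |T_s| > |T_B|, where |·| denotes the complex modulus. (In fact |T_s| ≥ tanh(π/4) > 0.655 and |T_B| ≤ 1/2.) -/

import Mathlib

/-!
Since `|sin (x + y i)|² = sin² x + sinh² y`, the two sines in `T_s` share the term
`sinh² (π ξ)`, so `|T_s|² ≥ sinh² (π ξ) / (1 + sinh² (π ξ)) = tanh² (π ξ) ≥ tanh² (π / 4)`,
and `tanh (π / 4) > 1 / 2`. On the other side, `Γ(s) Γ(2α) / Γ(s + 2α)` is the Beta integral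
`∫₀¹ x^(s-1) (1-x)^(2α-1) dx`; as `Re s = τ - 2α + 1 ≥ 1`, its modulus is at most `∫₀¹ (1-x)^(2α-1) dx = 1 / (2α)`, and
`sin (π α) ≤ π α` then gives `|T_B| ≤ 1 / 2`.
-/

/-- The term `T_s` of the generalised Fredholm symbol on the segment `Γ₁`. -/
noncomputable def Ts (α τ ξ : ℝ) : ℂ :=
  Complex.sin ((Real.pi : ℂ) * (1 - (τ : ℂ) + (α : ℂ) - Complex.I * (ξ : ℂ))) /
    Complex.sin ((Real.pi : ℂ) * (1 - (τ : ℂ) + 2 * (α : ℂ) - Complex.I * (ξ : ℂ)))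

/-- The term `T_B` of the generalised Fredholm symbol on the segment `Γ₁`. -/
noncomputable def TB (α τ ξ : ℝ) : ℂ :=
  Complex.sin ((Real.pi : ℂ) * (α : ℂ)) / (Real.pi : ℂ) *
      Complex.Gamma ((τ : ℂ) - 2 * (α : ℂ) + 1 + Complex.I * (ξ : ℂ)) *
      Complex.Gamma (2 * (α : ℂ)) /
    Complex.Gamma ((τ : ℂ) + 1 + Complex.I * (ξ : ℂ))

open Real
open Complex (I)

lemma Complex.norm_sin_add_mul_I_sq (x y : ℝ) :
    ‖Complex.sin (x + y * I)‖ ^ 2 = Real.sin x ^ 2 + Real.sinh y ^ 2 := by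
  rw [Complex.sin_add_mul_I, ← Complex.ofReal_sin, ← Complex.ofReal_cos, ← Complex.ofReal_cosh,
    ← Complex.ofReal_sinh, ← Complex.ofReal_mul, ← Complex.ofReal_mul, Complex.sq_norm,
    Complex.normSq_add_mul_I]
  nlinarith [Real.sin_sq_add_cos_sq x, Real.cosh_sq y]

lemma Real.tanh_sq_eq_one_sub_inv_cosh_sq (x : ℝ) : tanh x ^ 2 = 1 - 1 / cosh x ^ 2 := by
  have hcosh := (cosh_pos x).ne'
  rw [tanh_eq_sinh_div_cosh, div_pow, cosh_sq' x]
  field_simp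
  ring

lemma Real.abs_tanh_le_abs_tanh {x y : ℝ} (h : |x| ≤ |y|) : |tanh x| ≤ |tanh y| := by
  have hcosh : cosh x ^ 2 ≤ cosh y ^ 2 := pow_le_pow_left₀ (cosh_pos x).le (cosh_le_cosh.2 h) 2
  rw [← sq_le_sq, tanh_sq_eq_one_sub_inv_cosh_sq, tanh_sq_eq_one_sub_inv_cosh_sq]
  gcongr

lemma Real.one_half_lt_tanh_pi_div_four : 1 / 2 < tanh (π / 4) := by
  have hpos := exp_pos (π / 4)
  have hinv : exp (π / 4) * exp (-(π / 4)) = 1 := by rw [← exp_add, add_neg_cancel, exp_zero]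
  -- `1 / 2 < tanh x` amounts to `3 < exp (2 * x)`.
  have hsq : 3 < exp (π / 4) ^ 2 := by
    rw [sq, ← exp_add]
    nlinarith [quadratic_le_exp_of_nonneg (by positivity : 0 ≤ π / 4 + π / 4), pi_gt_three]
  rw [tanh_eq_sinh_div_cosh, lt_div_iff₀ (cosh_pos _), sinh_eq, cosh_eq]
  nlinarith [exp_pos (-(π / 4))]

lemma Complex.abs_tanh_le_norm_sin_div_sin (a b y : ℝ) :
    |Real.tanh y| ≤ ‖Complex.sin (a + y * I) / Complex.sin (b + y * I)‖ := by
  rcases eq_or_ne (Real.sinh y) 0 with hy | hy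
  · rw [Real.sinh_eq_zero.1 hy, Real.tanh_zero, abs_zero]
    positivity
  have hden := Complex.norm_sin_add_mul_I_sq b y
  have hden_pos : 0 < ‖Complex.sin (b + y * I)‖ :=
    lt_of_pow_lt_pow_left₀ 2 (norm_nonneg _) (by rw [zero_pow two_ne_zero, hden]; positivity)
  refine abs_le_of_sq_le_sq ?_ (norm_nonneg _)
  rw [norm_div, div_pow, Complex.norm_sin_add_mul_I_sq, hden, Real.tanh_eq_sinh_div_cosh,
    div_pow, Real.cosh_sq']
  gcongr
  · nlinarith [sq_nonneg (Real.sin a)]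
  · exact Real.sin_sq_le_one b

lemma tanh_pi_div_four_le_norm_Ts (α τ ξ : ℝ) (hξ : 1 / 4 ≤ ξ) : tanh (π / 4) ≤ ‖Ts α τ ξ‖ := by
  have hξπ : |π / 4| ≤ |-(π * ξ)| := by
    rw [abs_neg, abs_of_pos (by positivity), abs_of_pos (by nlinarith [pi_pos])]
    nlinarith [pi_pos]
  rw [Ts, show (π : ℂ) * (1 - τ + α - I * ξ) = ↑(π * (1 - τ + α)) + ↑(-(π * ξ)) * I by
      push_cast; ring,
    show (π : ℂ) * (1 - τ + 2 * α - I * ξ) = ↑(π * (1 - τ + 2 * α)) + ↑(-(π * ξ)) * I by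
      push_cast; ring]
  calc tanh (π / 4) ≤ |tanh (-(π * ξ))| := (le_abs_self _).trans (abs_tanh_le_abs_tanh hξπ)
    _ ≤ _ := Complex.abs_tanh_le_norm_sin_div_sin _ _ _

lemma integral_one_sub_rpow_sub_one {r : ℝ} (hr : 0 < r) :
    ∫ x in (0 : ℝ)..1, (1 - x) ^ (r - 1) = 1 / r := by
  rw [intervalIntegral.integral_comp_sub_left (fun u : ℝ => u ^ (r - 1)) 1, sub_self, sub_zero,
    integral_rpow (Or.inl (by linarith)), sub_add_cancel, one_rpow, zero_rpow hr.ne', sub_zero]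

lemma Complex.norm_betaIntegral_le {s t : ℂ} (hs : 1 ≤ s.re) (ht : 0 < t.re) :
    ‖betaIntegral s t‖ ≤ 1 / t.re := by
  have hint : IntervalIntegrable (fun x : ℝ => (1 - x) ^ (t.re - 1)) MeasureTheory.volume 0 1 :=
    intervalIntegral.intervalIntegrable_of_integral_ne_zero <| by
      rw [integral_one_sub_rpow_sub_one ht]; positivity
  rw [betaIntegral, ← integral_one_sub_rpow_sub_one ht]
  refine intervalIntegral.norm_integral_le_of_norm_le zero_le_one ?_ hint
  filter_upwards [MeasureTheory.volume.ae_ne 1] with x hx_ne hx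
  have hx0 : 0 < x := hx.1
  have hx1 : 0 < 1 - x := sub_pos.2 (lt_of_le_of_ne hx.2 hx_ne)
  rw [norm_mul, show (1 : ℂ) - x = ((1 - x : ℝ) : ℂ) by push_cast; ring,
    norm_cpow_eq_rpow_re_of_pos hx0, norm_cpow_eq_rpow_re_of_pos hx1, sub_re, sub_re, one_re]
  exact mul_le_of_le_one_left (by positivity) (rpow_le_one hx0.le hx.2 (by linarith))

lemma TB_eq_sin_mul_betaIntegral (α τ ξ : ℝ) (hα : 0 < α) (hτ : 2 * α < τ + 1) :
    TB α τ ξ =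
      Complex.sin (π * α) / π * Complex.betaIntegral (τ - 2 * α + 1 + I * ξ) (2 * α) := by
  have hΓ : Complex.Gamma (τ + 1 + I * ξ) ≠ 0 :=
    Complex.Gamma_ne_zero_of_re_pos (by simpa using (by linarith : 0 < τ + 1))
  have hβ := Complex.Gamma_mul_Gamma_eq_betaIntegral (s := τ - 2 * α + 1 + I * ξ) (t := 2 * α)
    (by simpa using (by linarith : 0 < τ - 2 * α + 1)) (by simpa using hα)
  rw [TB, mul_assoc, hβ, show (τ : ℂ) - 2 * α + 1 + I * ξ + 2 * α = τ + 1 + I * ξ by ring]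
  field_simp

lemma norm_TB_le_half (α τ ξ : ℝ) (hα : 0 < α) (hτ : 2 * α ≤ τ) : ‖TB α τ ξ‖ ≤ 1 / 2 := by
  have hB := Complex.norm_betaIntegral_le (s := τ - 2 * α + 1 + I * ξ) (t := 2 * α)
    (by simpa using (by linarith : 1 ≤ τ - 2 * α + 1)) (by simpa using hα)
  rw [TB_eq_sin_mul_betaIntegral α τ ξ hα (by linarith), norm_mul, norm_div,
    ← Complex.ofReal_mul, ← Complex.ofReal_sin, Complex.norm_real, Complex.norm_real,
    Real.norm_eq_abs, Real.norm_eq_abs, abs_of_pos pi_pos]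
  calc |Real.sin (π * α)| / π * ‖Complex.betaIntegral _ _‖
        ≤ π * α / π * (1 / (2 * α)) := by
        gcongr
        · simpa [abs_of_pos (mul_pos pi_pos hα)] using abs_sin_le_abs (x := π * α)
        · simpa using hB
    _ = 1 / 2 := by field_simp

theorem abs_Ts_gt_abs_TB_high_regularity
    (α τ ξ : ℝ) (hα : 0 < α) (hα' : α < 1) (hξ : 1 / 4 ≤ ξ)
    (hτ : 1 + α ≤ τ) :
    ‖TB α τ ξ‖ < ‖Ts α τ ξ‖ :=
  calc ‖TB α τ ξ‖ ≤ 1 / 2 := norm_TB_le_half α τ ξ hα (by linarith)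
    _ < tanh (π / 4) := one_half_lt_tanh_pi_div_four
    _ ≤ ‖Ts α τ ξ‖ := tanh_pi_div_four_le_norm_Ts α τ ξ hξ
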